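/- arXiv:2211.14704 — 3 statements merged into one kernel-verified Lean document; each statement's English description precedes it below -/
import Mathlib

section
/- For every integer n ≥ 2 and every real t, the matrix exponential satisfies e^{−itA(K_n)} = e^{−it(n−1)}·(J_n/n) + e^{it}·(I_n − J_n/n), where A(K_n) = J_n − I_n is the adjacency matrix of the complete graph K_n and J_n is the all-ones n×n matrix; consequently, for every vertex u of K_n and every real t, |⟨e_u, e^{−itA(K_n)} e_u⟩| = |e^{−it(n−1)}/n + e^{it}(1 − 1/n)| ≥ 1 − 2/n. -/
/-! `J_n / n` is idempotent and `A(K_n) = (n - 1) • (J_n / n) + (-1) • (1 - J_n / n)`. For an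
idempotent `p`, the powers of `a • p + b • (1 - p)` are `a ^ k • p + b ^ k • (1 - p)`, so the
exponential series splits along the two complementary idempotents. The diagonal entry of
`e^{-itA}` is then a sum of two terms of moduli `1/n` and `1 - 1/n`, and the reverse triangle
inequality gives the bound `1 - 2/n`. -/

noncomputable section

open Matrix

/-- The adjacency matrix of the complete graph `K_n`: `J_n - I_n`
(all entries `1` except `0` on the diagonal). -/
def adjKn (n : ℕ) : Matrix (Fin n) (Fin n) ℂ :=
  Matrix.of fun j k => if j = k then 0 else 1

/-- The all-ones `n × n` matrix `J_n`. -/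
def allOnes (n : ℕ) : Matrix (Fin n) (Fin n) ℂ :=
  Matrix.of fun _ _ => 1

namespace IsIdempotentElem

variable {R A : Type*} [CommRing R] [Ring A] [Algebra R A] {p : A}

theorem smul_add_smul_one_sub_pow (hp : IsIdempotentElem p) (a b : R) (k : ℕ) :
    (a • p + b • (1 - p)) ^ k = a ^ k • p + b ^ k • (1 - p) := by
  induction k with
  | zero => simp
  | succ k ih =>
    simp only [pow_succ, ih, add_mul, mul_add, smul_mul_smul_comm, hp.eq, hp.one_sub.eq,
      hp.mul_one_sub_self, hp.one_sub_mul_self, smul_zero, add_zero, zero_add]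

end IsIdempotentElem

theorem IsIdempotentElem.exp_smul_add_smul_one_sub {A : Type*} [Ring A] [Algebra ℂ A]
    [TopologicalSpace A] [IsTopologicalRing A] [ContinuousSMul ℂ A] [T2Space A] {p : A}
    (hp : IsIdempotentElem p) (a b : ℂ) :
    NormedSpace.exp (a • p + b • (1 - p)) = Complex.exp a • p + Complex.exp b • (1 - p) := by
  have hsum : ∀ z : ℂ, Summable fun k : ℕ => (k.factorial⁻¹ : ℂ) * z ^ k := fun z => by
    simpa [div_eq_inv_mul] using NormedSpace.expSeries_div_summable z
  have hexp : ∀ z : ℂ, Complex.exp z = ∑' k : ℕ, (k.factorial⁻¹ : ℂ) * z ^ k := fun z => by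
    rw [Complex.exp_eq_exp_ℂ, NormedSpace.exp_eq_tsum ℂ]
    rfl
  simp only [NormedSpace.exp_eq_tsum ℂ, hp.smul_add_smul_one_sub_pow, smul_add, smul_smul]
  rw [((hsum a).smul_const p).tsum_add ((hsum b).smul_const (1 - p)),
    (hsum a).tsum_smul_const, (hsum b).tsum_smul_const, hexp, hexp]

theorem allOnes_mul_allOnes (n : ℕ) : allOnes n * allOnes n = (n : ℂ) • allOnes n := by
  ext j k
  simp [allOnes, Matrix.mul_apply]

theorem isIdempotentElem_inv_smul_allOnes {n : ℕ} (hn : n ≠ 0) :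
    IsIdempotentElem ((n : ℂ)⁻¹ • allOnes n) := by
  rw [IsIdempotentElem, smul_mul_smul_comm, allOnes_mul_allOnes, smul_smul,
    inv_mul_cancel_right₀ (Nat.cast_ne_zero.mpr hn)]

theorem adjKn_eq_smul_add_smul {n : ℕ} (hn : n ≠ 0) :
    adjKn n
      = ((n : ℂ) - 1) • ((n : ℂ)⁻¹ • allOnes n) + (-1 : ℂ) • (1 - (n : ℂ)⁻¹ • allOnes n) := by
  have hn' : (n : ℂ) ≠ 0 := Nat.cast_ne_zero.mpr hn
  ext j k
  by_cases hjk : j = k <;> simp [adjKn, allOnes, hjk] <;> field_simp <;> ring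

theorem diag_smul_add_smul_one_sub_inv_smul_allOnes (n : ℕ) (a b : ℂ) (u : Fin n) :
    (a • ((n : ℂ)⁻¹ • allOnes n) + b • (1 - (n : ℂ)⁻¹ • allOnes n)) u u
      = a / n + b * (1 - 1 / n) := by
  simp [allOnes, div_eq_mul_inv]

theorem one_sub_two_mul_le_norm_mul_add_mul {x y : ℂ} (hx : ‖x‖ = 1) (hy : ‖y‖ = 1) {r : ℝ}
    (hr : 0 ≤ r) : 1 - 2 * r ≤ ‖x * r + y * (1 - r)‖ := by
  have hyr : ‖y * (1 - r)‖ = |1 - r| := by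
    rw [norm_mul, hy, one_mul, ← Complex.ofReal_one, ← Complex.ofReal_sub, Complex.norm_real,
      Real.norm_eq_abs]
  calc 1 - 2 * r ≤ |1 - r| - r := by linarith [le_abs_self (1 - r)]
    _ = ‖y * (1 - r)‖ - ‖x * r‖ := by
      rw [hyr, norm_mul, hx, one_mul, Complex.norm_real, Real.norm_eq_abs, abs_of_nonneg hr]
    _ ≤ ‖x * r + y * (1 - r)‖ := by
      simpa [add_comm] using norm_sub_norm_le (y * (1 - r)) (-(x * r))

/-- For every integer `n ≥ 2` and every real `t`,
`e^{-itA(K_n)} = e^{-it(n-1)} (J_n/n) + e^{it} (I_n - J_n/n)`; consequently, for every vertex `u`,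
`|⟨e_u, e^{-itA(K_n)} e_u⟩| = |e^{-it(n-1)}/n + e^{it}(1 - 1/n)| ≥ 1 - 2/n`. -/
theorem clique_exponential_and_sedentary (n : ℕ) (hn : 2 ≤ n) (t : ℝ) :
    NormedSpace.exp ((-(t : ℂ) * Complex.I) • adjKn n)
      = Complex.exp (-(t : ℂ) * Complex.I * ((n : ℂ) - 1)) • ((n : ℂ)⁻¹ • allOnes n)
        + Complex.exp ((t : ℂ) * Complex.I) • ((1 : Matrix (Fin n) (Fin n) ℂ)
            - (n : ℂ)⁻¹ • allOnes n) ∧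
    ∀ u : Fin n,
      ‖NormedSpace.exp ((-(t : ℂ) * Complex.I) • adjKn n) u u‖
          = ‖Complex.exp (-(t : ℂ) * Complex.I * ((n : ℂ) - 1)) / (n : ℂ)
              + Complex.exp ((t : ℂ) * Complex.I) * (1 - 1 / (n : ℂ))‖ ∧
        1 - 2 / (n : ℝ)
          ≤ ‖NormedSpace.exp ((-(t : ℂ) * Complex.I) • adjKn n) u u‖ := by
  have hn0 : n ≠ 0 := by omega
  have hdecomp : (-(t : ℂ) * Complex.I) • adjKn n
      = (-(t : ℂ) * Complex.I * ((n : ℂ) - 1)) • ((n : ℂ)⁻¹ • allOnes n)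
        + ((t : ℂ) * Complex.I) • (1 - (n : ℂ)⁻¹ • allOnes n) := by
    rw [adjKn_eq_smul_add_smul hn0]
    module
  have hexp := hdecomp ▸ (isIdempotentElem_inv_smul_allOnes hn0).exp_smul_add_smul_one_sub
    (-(t : ℂ) * Complex.I * ((n : ℂ) - 1)) ((t : ℂ) * Complex.I)
  refine ⟨hexp, fun u => ?_⟩
  rw [hexp, diag_smul_add_smul_one_sub_inv_smul_allOnes]
  refine ⟨rfl, ?_⟩
  have hunit : ‖Complex.exp (-(t : ℂ) * Complex.I * ((n : ℂ) - 1))‖ = 1 := by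
    simp [Complex.norm_exp]
  convert one_sub_two_mul_le_norm_mul_add_mul hunit (Complex.norm_exp_ofReal_mul_I t)
    (one_div_nonneg.mpr (Nat.cast_nonneg n)) using 2
  · ring
  · push_cast; ring
end
end

section
/- Let n ≥ 2 and let L_n be the infinite lollipop graph. Then every clique vertex j ∈ {1, …, n−1} (i.e., every vertex of K_n other than the attachment vertex n) is sedentary in the quantitative sense that for all real t, |⟨e_j, e^{−itA(L_n)} e_j⟩| ≥ 1 − 2/(n−1). -/
noncomputable section

/-- Vertices of the infinite lollipop graph: we use `ℕ`, where the positive integers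
`1, 2, 3, …` are the actual vertices (the index `0` is unused and isolated).
The vertices `1, …, n` induce the complete graph `K_n` and the vertices `n, n+1, n+2, …`
induce a one-way infinite path, so `n` is the attachment vertex. -/
def lollipopAdj (n : ℕ) (j k : ℕ) : Prop :=
  (j ≠ k ∧ 1 ≤ j ∧ j ≤ n ∧ 1 ≤ k ∧ k ≤ n) ∨
  (k = j + 1 ∧ n ≤ j) ∨ (j = k + 1 ∧ n ≤ k)

instance (n j k : ℕ) : Decidable (lollipopAdj n j k) := by
  unfold lollipopAdj; infer_instance

/-- The Hilbert space `ℓ²(ℤ⁺)` (with a dummy coordinate `0`). -/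
abbrev lollipopSpace := lp (fun _ : ℕ => ℂ) 2

/-- The standard orthonormal basis vector `e_k` of `ℓ²`. -/
def stdVec (k : ℕ) : lollipopSpace := lp.single 2 k 1


/-! Let `m = n - 1` and `s = (e_1 + ⋯ + e_m) / m`. A clique vertex `k < n` is adjacent exactly to
the other vertices of the clique, so `A e_k = (e_1 + ⋯ + e_n) - e_k`; averaging over `k ≤ m`
shows that `w = e_j - s` satisfies `A w = -w`. Hence `U = e^{-itA}` multiplies `w` by the
unimodular `e^{it}`, and since `s ⊥ w` and `U` is unitary, `⟨e_j, U e_j⟩ = ⟨s, U s⟩ + e^{it}‖w‖²`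
has modulus at least `‖w‖² - ‖s‖² = (1 - 1/m) - 1/m`. -/

open Finset

theorem NormedSpace.exp_apply_of_apply_eq_smul {E : Type*} [NormedAddCommGroup E]
    [NormedSpace ℂ E] [CompleteSpace E] (B : E →L[ℂ] E) {v : E} {μ : ℂ} (h : B v = μ • v) :
    NormedSpace.exp B v = Complex.exp μ • v := by
  have hpow : ∀ k : ℕ, (B ^ k) v = μ ^ k • v := by
    intro k
    induction k with
    | zero => simp
    | succ k ih => rw [pow_succ', mul_apply_eq_comp, ih, map_smul, h, smul_smul, pow_succ]
  have hB :=
    (NormedSpace.exp_series_hasSum_exp' (𝕂 := ℂ) B).mapL (ContinuousLinearMap.apply ℂ E v)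
  have hμ := (NormedSpace.exp_series_hasSum_exp' (𝕂 := ℂ) μ).smul_const v
  rw [← Complex.exp_eq_exp_ℂ] at hμ
  refine hB.unique ?_
  convert hμ using 2 with k
  simp [hpow, smul_smul]

theorem le_norm_inner_add_apply_add {E : Type*} [NormedAddCommGroup E] [InnerProductSpace ℂ E]
    [CompleteSpace E] {U : E →L[ℂ] E} (hU : U ∈ unitary (E →L[ℂ] E)) {s w : E} {c : ℂ}
    (hc : ‖c‖ = 1) (hUw : U w = c • w) (hsw : inner ℂ s w = 0) :
    ‖w‖ ^ 2 - ‖s‖ ^ 2 ≤ ‖inner ℂ (s + w) (U (s + w))‖ := by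
  have hws : inner ℂ w (U s) = 0 := by
    have h := ContinuousLinearMap.inner_map_map_of_mem_unitary hU w s
    rw [hUw, inner_smul_left, inner_eq_zero_symm.mp hsw] at h
    exact (mul_eq_zero.mp h).resolve_left (by simp [← norm_ne_zero_iff, hc])
  have hexpand : inner ℂ (s + w) (U (s + w)) = inner ℂ s (U s) + c * inner ℂ w w := by
    rw [map_add, inner_add_left, inner_add_right, inner_add_right, hws, hUw, inner_smul_right,
      inner_smul_right, hsw]
    ring
  calc ‖w‖ ^ 2 - ‖s‖ ^ 2 = ‖c * inner ℂ w w‖ - ‖s‖ * ‖U s‖ := by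
        rw [ContinuousLinearMap.norm_map_of_mem_unitary hU, norm_mul, hc,
          inner_self_eq_norm_sq_to_K, norm_pow, RCLike.norm_ofReal, abs_norm]
        ring
    _ ≤ ‖c * inner ℂ w w‖ - ‖inner ℂ s (U s)‖ := by gcongr; exact norm_inner_le_norm _ _
    _ ≤ ‖inner ℂ (s + w) (U (s + w))‖ := by
        rw [hexpand, add_comm]
        linarith [norm_le_add_norm_add (c * inner ℂ w w) (inner ℂ s (U s))]

section Orthonormal

variable {ι E : Type*} [NormedAddCommGroup E] [InnerProductSpace ℂ E] {v : ι → E}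
  (hv : Orthonormal ℂ v) (T : Finset ι)
include hv

theorem Orthonormal.inner_sum_of_mem {j : ι} (hj : j ∈ T) : inner ℂ (v j) (∑ k ∈ T, v k) = 1 := by
  simpa only [one_smul] using hv.inner_right_sum (fun _ => (1 : ℂ)) hj

theorem Orthonormal.norm_sum_sq : ‖∑ k ∈ T, v k‖ ^ 2 = #T := by
  have h := inner_self_eq_norm_sq_to_K (𝕜 := ℂ) (∑ k ∈ T, v k)
  rw [sum_inner, sum_congr rfl fun k hk => hv.inner_sum_of_mem T hk] at h
  exact_mod_cast (by simpa using h.symm : ((‖∑ k ∈ T, v k‖ ^ 2 : ℝ) : ℂ) = #T)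

theorem Orthonormal.norm_inv_card_smul_sum_sq :
    ‖(#T : ℂ)⁻¹ • ∑ k ∈ T, v k‖ ^ 2 = (#T : ℝ)⁻¹ := by
  rw [norm_smul, mul_pow, hv.norm_sum_sq, norm_inv, Complex.norm_natCast]
  rcases eq_or_ne (#T) 0 with hT | hT
  · simp [hT]
  · field_simp

theorem Orthonormal.inner_inv_card_smul_sum_sub {j : ι} (hj : j ∈ T) :
    inner ℂ ((#T : ℂ)⁻¹ • ∑ k ∈ T, v k) (v j - (#T : ℂ)⁻¹ • ∑ k ∈ T, v k) = 0 := by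
  rw [inner_sub_right, ← inner_conj_symm, inner_smul_right, hv.inner_sum_of_mem T hj,
    inner_self_eq_norm_sq_to_K, ← RCLike.ofReal_pow, hv.norm_inv_card_smul_sum_sq]
  simp

theorem Orthonormal.norm_sub_inv_card_smul_sum_sq {j : ι} (hj : j ∈ T) :
    ‖v j - (#T : ℂ)⁻¹ • ∑ k ∈ T, v k‖ ^ 2 = 1 - (#T : ℝ)⁻¹ := by
  have h := norm_add_sq_eq_norm_sq_add_norm_sq_of_inner_eq_zero _ _
    (hv.inner_inv_card_smul_sum_sub T hj)
  rw [add_sub_cancel, hv.1 j] at h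
  linarith [hv.norm_inv_card_smul_sum_sq T]

end Orthonormal

theorem stdVec_apply (k i : ℕ) : (stdVec k : ℕ → ℂ) i = if i = k then 1 else 0 := by
  rw [stdVec, lp.single_apply]
  split_ifs <;> simp_all

theorem inner_stdVec_left (i : ℕ) (f : lollipopSpace) : inner ℂ (stdVec i) f = f i := by
  rw [stdVec, lp.inner_single_left]
  simp [RCLike.inner_apply]

theorem inner_stdVec_stdVec (i k : ℕ) :
    inner ℂ (stdVec i) (stdVec k) = if i = k then 1 else 0 := by
  rw [inner_stdVec_left, stdVec_apply]

theorem orthonormal_stdVec : Orthonormal ℂ stdVec :=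
  orthonormal_iff_ite.mpr inner_stdVec_stdVec

theorem stdVec_ext {f g : lollipopSpace} (h : ∀ i, inner ℂ (stdVec i) f = inner ℂ (stdVec i) g) :
    f = g :=
  lp.ext <| funext fun i => by simpa only [inner_stdVec_left] using h i

theorem lollipopAdj_iff_of_lt {n i j : ℕ} (hj1 : 1 ≤ j) (hjn : j < n) :
    lollipopAdj n i j ↔ i ≠ j ∧ 1 ≤ i ∧ i ≤ n := by
  unfold lollipopAdj
  omega

section Adjacency

variable {n : ℕ} {A : lollipopSpace →L[ℂ] lollipopSpace}
  (hA : ∀ j k : ℕ, inner ℂ (stdVec j) (A (stdVec k)) = if lollipopAdj n j k then 1 else 0)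
include hA

theorem apply_stdVec_of_lt {j : ℕ} (hj1 : 1 ≤ j) (hjn : j < n) :
    A (stdVec j) = ∑ k ∈ Icc 1 n, stdVec k - stdVec j :=
  stdVec_ext fun i => by
    simp only [hA, lollipopAdj_iff_of_lt hj1 hjn, inner_sub_right, inner_sum, inner_stdVec_stdVec,
      sum_ite_eq, mem_Icc]
    split_ifs <;> first | omega | norm_num

theorem apply_stdVec_sub_inv_card_smul_sum {j : ℕ} (hj : j ∈ Icc 1 (n - 1)) :
    A (stdVec j - (#(Icc 1 (n - 1)) : ℂ)⁻¹ • ∑ k ∈ Icc 1 (n - 1), stdVec k)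
      = -(stdVec j - (#(Icc 1 (n - 1)) : ℂ)⁻¹ • ∑ k ∈ Icc 1 (n - 1), stdVec k) := by
  have hlt : ∀ k ∈ Icc 1 (n - 1), 1 ≤ k ∧ k < n := fun k hk => by
    rw [mem_Icc] at hk hj; omega
  have hcard : (#(Icc 1 (n - 1)) : ℂ) ≠ 0 := Nat.cast_ne_zero.mpr (card_ne_zero_of_mem hj)
  rw [map_sub, map_smul, map_sum, sum_congr rfl fun k hk =>
      apply_stdVec_of_lt hA (hlt k hk).1 (hlt k hk).2,
    apply_stdVec_of_lt hA (hlt j hj).1 (hlt j hj).2, sum_sub_distrib, sum_const,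
    smul_sub, ← Nat.cast_smul_eq_nsmul ℂ, smul_smul, inv_mul_cancel₀ hcard, one_smul]
  abel

end Adjacency

theorem lollipop_clique_sedentary_general (n : ℕ)
    (A : lollipopSpace →L[ℂ] lollipopSpace) (hsa : IsSelfAdjoint A)
    (hA : ∀ j k : ℕ, (inner ℂ (stdVec j) (A (stdVec k)) : ℂ)
      = if lollipopAdj n j k then 1 else 0)
    (j : ℕ) (hj1 : 1 ≤ j) (hjn : j ≤ n - 1) (t : ℝ) :
    1 - 2 / ((n : ℝ) - 1)
      ≤ ‖(inner ℂ (stdVec j) (NormedSpace.exp ((-(t : ℂ) * Complex.I) • A) (stdVec j)))‖ := by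
  have hj : j ∈ Icc 1 (n - 1) := mem_Icc.mpr ⟨hj1, hjn⟩
  set s := (#(Icc 1 (n - 1)) : ℂ)⁻¹ • ∑ k ∈ Icc 1 (n - 1), stdVec k
  have hU : NormedSpace.exp ((-(t : ℂ) * Complex.I) • A) ∈ unitary _ :=
    let +nondep : NormedAlgebra ℚ (lollipopSpace →L[ℂ] lollipopSpace) := .restrictScalars ℚ ℂ _
    NormedSpace.exp_mem_unitary_of_mem_skewAdjoint
      (hsa.smul_mem_skewAdjoint (by simp [skewAdjoint.mem_iff]))
  have hUw : NormedSpace.exp ((-(t : ℂ) * Complex.I) • A) (stdVec j - s)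
      = Complex.exp (t * Complex.I) • (stdVec j - s) := by
    refine NormedSpace.exp_apply_of_apply_eq_smul _ ?_
    rw [smul_apply, apply_stdVec_sub_inv_card_smul_sum hA hj]
    module
  have hbound := le_norm_inner_add_apply_add hU (Complex.norm_exp_ofReal_mul_I t) hUw
    (orthonormal_stdVec.inner_inv_card_smul_sum_sub _ hj)
  rw [add_sub_cancel, orthonormal_stdVec.norm_sub_inv_card_smul_sum_sq _ hj,
    orthonormal_stdVec.norm_inv_card_smul_sum_sq, Nat.card_Icc, add_tsub_cancel_right,
    Nat.cast_sub (by omega : 1 ≤ n), Nat.cast_one] at hbound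
  linarith [div_eq_mul_inv 2 ((n : ℝ) - 1)]

/-- Let `n ≥ 2` and let `L_n` be the infinite lollipop graph.  Every clique vertex
`j ∈ {1, …, n-1}` (every vertex of `K_n` other than the attachment vertex `n`) is
sedentary: for all real `t`, `|⟨e_j, e^{-itA(L_n)} e_j⟩| ≥ 1 - 2/(n-1)`. -/
theorem lollipop_clique_sedentary (n : ℕ) (hn : 2 ≤ n)
    (A : lollipopSpace →L[ℂ] lollipopSpace) (hsa : IsSelfAdjoint A)
    (hA : ∀ j k : ℕ, (inner ℂ (stdVec j) (A (stdVec k)) : ℂ)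
      = if lollipopAdj n j k then 1 else 0)
    (j : ℕ) (hj1 : 1 ≤ j) (hjn : j ≤ n - 1) (t : ℝ) :
    1 - 2 / ((n : ℝ) - 1)
      ≤ ‖(inner ℂ (stdVec j) (NormedSpace.exp ((-(t : ℂ) * Complex.I) • A) (stdVec j)))‖ :=
  lollipop_clique_sedentary_general n A hsa hA j hj1 hjn t
end
end

section
/- For every integer m ≥ 1, the Krawtchouk chain K_m has perfect state transfer between its endpoints at time π/2: exp(−i(π/2) K_m) e_0 = (−i)^m e_m, where e_0 and e_m are the first and last standard basis vectors of ℂ^{m+1}; in particular |⟨e_m, exp(−i(π/2)K_m) e_0⟩| = 1. -/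
/-!
Conjugation by `D = diag (√(m choose j))` turns `K_m` into the quotient matrix `B` of the
hypercube by its weight partition (`B j (j+1) = m - j`, `B j (j-1) = j`), which has no square roots.
The weight-`j` amplitude `cos t ^ (m - j) * (-i sin t) ^ j` of the product state
`(cos t e₀ - i sin t e₁)^{⊗m}` solves `G' = -i B G`, so `D G` solves the Schrödinger equation of
`K_m` with initial value `e₀`. By uniqueness of solutions of linear ODEs, `D G(t) = exp(-itK_m) e₀`,
and at `t = π/2` only the entry `j = m`, equal to `(-i)^m`, survives.
-/

noncomputable section

open Matrix

def kraw (m : ℕ) : Matrix (Fin (m + 1)) (Fin (m + 1)) ℂ :=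
  Matrix.of fun j k =>
    if (k : ℕ) = (j : ℕ) + 1 then
      (Real.sqrt ((((j : ℕ) : ℝ) + 1) * ((m : ℝ) - ((j : ℕ) : ℝ))) : ℂ)
    else if (j : ℕ) = (k : ℕ) + 1 then
      (Real.sqrt ((((k : ℕ) : ℝ) + 1) * ((m : ℝ) - ((k : ℕ) : ℝ))) : ℂ)
    else 0

open Complex

theorem HasDerivAt.const_mulVec {𝕜 m n : Type*} [RCLike 𝕜] [Fintype n] (A : Matrix m n 𝕜)
    {f : ℝ → n → 𝕜} {f' : n → 𝕜} {t : ℝ} (hf : HasDerivAt f f' t) :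
    HasDerivAt (fun s => A *ᵥ f s) (A *ᵥ f') t :=
  hasDerivAt_pi.2 fun i => HasDerivAt.fun_sum fun j _ => (hasDerivAt_pi.1 hf j).const_mul (A i j)

open scoped Matrix.Norms.Operator in
theorem Matrix.exp_smul_mulVec_eq_of_hasDerivAt {𝕜 n : Type*} [RCLike 𝕜] [Fintype n]
    [DecidableEq n] (M : Matrix n n 𝕜) {f : ℝ → n → 𝕜} (hf : ∀ t, HasDerivAt f (M *ᵥ f t) t)
    (t : ℝ) : NormedSpace.exp (t • M) *ᵥ f 0 = f t := by
  let applyInit : Matrix n n 𝕜 →L[ℝ] n → 𝕜 := LinearMap.toContinuousLinearMap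
    { toFun := (· *ᵥ f 0)
      map_add' := fun A B => add_mulVec A B _
      map_smul' := fun c A => smul_mulVec c A _ }
  have hexp (s : ℝ) : HasDerivAt (fun s : ℝ => NormedSpace.exp (s • M) *ᵥ f 0)
      (M *ᵥ (NormedSpace.exp (s • M) *ᵥ f 0)) s :=
    (applyInit.hasFDerivAt.comp_hasDerivAt s (hasDerivAt_exp_smul_const' M s)).congr_deriv
      (mulVec_mulVec _ _ _).symm
  have hlip := (LinearMap.toContinuousLinearMap (mulVecLin M)).lipschitz
  refine congrFun (ODE_solution_unique_univ (v := fun _ => (M *ᵥ ·)) (s := fun _ => Set.univ)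
    (t₀ := 0) (fun _ => hlip.lipschitzOnWith) (fun s => ⟨hexp s, trivial⟩)
    (fun s => ⟨hf s, trivial⟩) (by simp)) t

theorem Real.sqrt_mul_sqrt_eq_sqrt_mul_of_mul_eq {a w b c : ℝ} (ha : 0 ≤ a) (hc : 0 ≤ c)
    (h : a * w = b * c ^ 2) : √w * √a = √b * c := by
  rw [← Real.sqrt_mul' _ ha, mul_comm, h, Real.sqrt_mul' _ (sq_nonneg c), Real.sqrt_sq hc]

lemma sqrt_succ_mul_sub_mul_sqrt_choose_succ {m i : ℕ} (hi : i ≤ m) :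
    √((i + 1) * (m - i)) * √(m.choose (i + 1)) = √(m.choose i) * (m - i) := by
  have h := Nat.choose_succ_right_eq m i
  have hmi : (i : ℝ) ≤ m := by exact_mod_cast hi
  refine Real.sqrt_mul_sqrt_eq_sqrt_mul_of_mul_eq (by positivity) (by linarith) ?_
  rify [hi] at h
  linear_combination ((m : ℝ) - i) * h

lemma sqrt_succ_mul_sub_mul_sqrt_choose {m i : ℕ} (hi : i ≤ m) :
    √((i + 1) * (m - i)) * √(m.choose i) = √(m.choose (i + 1)) * (i + 1) := by
  have h := Nat.choose_succ_right_eq m i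
  refine Real.sqrt_mul_sqrt_eq_sqrt_mul_of_mul_eq (by positivity) (by positivity) ?_
  rify [hi] at h
  linear_combination (-(i + 1 : ℝ)) * h

def hypercubeQuotient (m : ℕ) : Matrix (Fin (m + 1)) (Fin (m + 1)) ℂ :=
  of fun j k => if (k : ℕ) = j + 1 then (m - j : ℂ) else if (j : ℕ) = k + 1 then (j : ℂ) else 0

def sqrtChooseDiagonal (m : ℕ) : Matrix (Fin (m + 1)) (Fin (m + 1)) ℂ :=
  diagonal fun j => (√(m.choose j) : ℂ)

lemma kraw_mul_sqrtChooseDiagonal (m : ℕ) :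
    kraw m * sqrtChooseDiagonal m = sqrtChooseDiagonal m * hypercubeQuotient m := by
  ext j k
  simp only [sqrtChooseDiagonal, mul_diagonal, diagonal_mul, kraw, hypercubeQuotient, of_apply]
  split_ifs with h₁ h₂
  · rw [h₁]
    exact_mod_cast sqrt_succ_mul_sub_mul_sqrt_choose_succ (by omega)
  · rw [h₂]
    exact_mod_cast sqrt_succ_mul_sub_mul_sqrt_choose (by omega)
  · simp

lemma hypercubeQuotient_mulVec_apply (m : ℕ) (x : ℕ → ℂ) (j : Fin (m + 1)) :
    (hypercubeQuotient m *ᵥ fun k => x k) j = (m - j) * x (j + 1) + j * x (j - 1) := by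
  simp only [mulVec, dotProduct, hypercubeQuotient, of_apply]
  rw [Fin.sum_univ_eq_sum_range (fun k => (if k = j + 1 then (m - j : ℂ)
    else if (j : ℕ) = k + 1 then (j : ℂ) else 0) * x k)]
  obtain ⟨j, hj⟩ := j
  have hsplit (k : ℕ) : (if k = j + 1 then (m - j : ℂ) else if j = k + 1 then (j : ℂ) else 0) * x k
      = (if k = j + 1 then (m - j : ℂ) * x k else 0) + (if k + 1 = j then (j : ℂ) * x k else 0) := by
    split_ifs <;> first | omega | simp
  simp only [hsplit, Finset.sum_add_distrib, Finset.sum_ite_eq', Finset.mem_range]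
  congr 1
  · split_ifs with h
    · rfl
    · simp [show j = m by omega]
  · cases j with
    | zero => simp
    | succ i => simp [show i < m + 1 by omega]

def quotientAmplitude (m : ℕ) (t : ℝ) (j : ℕ) : ℂ :=
  cos t ^ (m - j) * (-I * sin t) ^ j

lemma hasDerivAt_quotientAmplitude {m j : ℕ} (hj : j ≤ m) (t : ℝ) :
    HasDerivAt (fun s => quotientAmplitude m s j)
      (-I * ((m - j) * quotientAmplitude m t (j + 1) + j * quotientAmplitude m t (j - 1))) t := by
  have hcos : HasDerivAt (fun s : ℝ => cos s) (-I * (-I * sin t)) t :=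
    (hasDerivAt_cos (t : ℂ)).comp_ofReal.congr_deriv (by linear_combination -sin (t : ℂ) * I_sq)
  have hsin : HasDerivAt (fun s : ℝ => -I * sin s) (-I * cos t) t :=
    (hasDerivAt_sin (t : ℂ)).comp_ofReal.const_mul (-I)
  refine ((hcos.fun_pow (m - j)).mul (hsin.fun_pow j)).congr_deriv ?_
  obtain ⟨n, rfl⟩ := Nat.exists_eq_add_of_le hj
  simp only [quotientAmplitude, Nat.add_sub_cancel_left, Nat.cast_add,
    show j + n - (j + 1) = n - 1 by omega]
  cases j with
  | zero => simp only [Nat.cast_zero]; ring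
  | succ i =>
    rw [Nat.add_sub_cancel, show i + 1 + n - i = n + 1 by omega]
    push_cast
    ring

lemma hasDerivAt_quotientAmplitude_vec (m : ℕ) (t : ℝ) :
    HasDerivAt (fun s (j : Fin (m + 1)) => quotientAmplitude m s j)
      ((-I • hypercubeQuotient m) *ᵥ fun j => quotientAmplitude m t j) t := by
  refine hasDerivAt_pi.2 fun j => ?_
  rw [smul_mulVec, Pi.smul_apply, hypercubeQuotient_mulVec_apply, smul_eq_mul]
  exact hasDerivAt_quotientAmplitude (Nat.lt_succ_iff.1 j.2) t

def krawAmplitude (m : ℕ) (t : ℝ) : Fin (m + 1) → ℂ :=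
  sqrtChooseDiagonal m *ᵥ fun j => quotientAmplitude m t j

lemma hasDerivAt_krawAmplitude (m : ℕ) (t : ℝ) :
    HasDerivAt (krawAmplitude m) ((-I • kraw m) *ᵥ krawAmplitude m t) t := by
  refine ((hasDerivAt_quotientAmplitude_vec m t).const_mulVec _).congr_deriv ?_
  rw [krawAmplitude, mulVec_mulVec, mulVec_mulVec, smul_mul, kraw_mul_sqrtChooseDiagonal,
    Matrix.mul_smul]

lemma krawAmplitude_zero (m : ℕ) : krawAmplitude m 0 = Pi.single 0 1 := by
  ext j
  rcases eq_or_ne j 0 with rfl | hj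
  · simp [krawAmplitude, sqrtChooseDiagonal, quotientAmplitude, mulVec_diagonal]
  · simp [krawAmplitude, sqrtChooseDiagonal, quotientAmplitude, mulVec_diagonal, hj]

lemma krawAmplitude_pi_div_two (m : ℕ) :
    krawAmplitude m (Real.pi / 2) = (-I) ^ m • Pi.single (Fin.last m) 1 := by
  ext j
  rcases eq_or_ne j (Fin.last m) with rfl | hj
  · simp [krawAmplitude, sqrtChooseDiagonal, quotientAmplitude, mulVec_diagonal]
  · have : m - j ≠ 0 := by have := Fin.val_lt_last hj; omega
    simp [krawAmplitude, sqrtChooseDiagonal, quotientAmplitude, mulVec_diagonal, hj, this]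

theorem krawtchouk_pst_general (m : ℕ) :
    NormedSpace.exp ((-((Real.pi : ℂ) / 2) * Complex.I) • kraw m) *ᵥ
        (Pi.single (0 : Fin (m + 1)) 1 : Fin (m + 1) → ℂ)
      = (-Complex.I) ^ m • (Pi.single (Fin.last m) 1 : Fin (m + 1) → ℂ) ∧
    ‖(NormedSpace.exp ((-((Real.pi : ℂ) / 2) * Complex.I) • kraw m) (Fin.last m) 0)‖
      = 1 := by
  have hpst : NormedSpace.exp ((-((Real.pi : ℂ) / 2) * I) • kraw m) *ᵥ Pi.single 0 1
      = (-I) ^ m • Pi.single (Fin.last m) 1 := by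
    have h := exp_smul_mulVec_eq_of_hasDerivAt _ (hasDerivAt_krawAmplitude m) (Real.pi / 2)
    rwa [krawAmplitude_zero, krawAmplitude_pi_div_two, ← Complex.coe_smul, smul_smul,
      show ((Real.pi / 2 : ℝ) : ℂ) * -I = -((Real.pi : ℂ) / 2) * I by push_cast; ring] at h
  refine ⟨hpst, ?_⟩
  have hentry := congrFun hpst (Fin.last m)
  rw [mulVec_single_one, col_apply] at hentry
  rw [hentry]
  simp

/-- For every `m ≥ 1` the Krawtchouk chain has perfect state transfer between its endpoints
at time `π/2`: `exp(-i(π/2)K_m) e_0 = (-i)^m e_m`, hence `|⟨e_m, exp(-i(π/2)K_m)e_0⟩| = 1`. -/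
theorem krawtchouk_pst (m : ℕ) (hm : 1 ≤ m) :
    NormedSpace.exp ((-((Real.pi : ℂ) / 2) * Complex.I) • kraw m) *ᵥ
        (Pi.single (0 : Fin (m + 1)) 1 : Fin (m + 1) → ℂ)
      = (-Complex.I) ^ m • (Pi.single (Fin.last m) 1 : Fin (m + 1) → ℂ) ∧
    ‖(NormedSpace.exp ((-((Real.pi : ℂ) / 2) * Complex.I) • kraw m) (Fin.last m) 0)‖
      = 1 :=
  krawtchouk_pst_general m
end
end
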